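/- arXiv:1508.05748 — 2 statements merged into one kernel-verified Lean document; each statement's English description precedes it below -/
import Mathlib

section
/- The function ν is unbounded: for every natural number N there exists a positive integer n with ν(n) ≥ N. In particular, limsup_{n→∞} ν(n) = ∞. -/
/-! Along an arithmetic progression `F (k - d) k (k + d) = 9 d² k`. Taking `m = (N!)³`, every
`d ≤ N` has `d² ∣ m` and `d ≤ m / d²`, so the progressions with middle term `m / d²` and common
difference `d`, for `d = 1, …, N`, give `N` distinct representations of `9 m`. -/

def F (x y z : ℕ) : ℤ :=
  (x : ℤ) ^ 3 + (y : ℤ) ^ 3 + (z : ℤ) ^ 3 - 3 * (x : ℤ) * (y : ℤ) * (z : ℤ)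

noncomputable def nu (n : ℕ) : ℕ :=
  Set.ncard {t : ℕ × ℕ × ℕ |
    t.1 ≤ t.2.1 ∧ t.2.1 ≤ t.2.2 ∧ t.1 + 1 ≤ t.2.2 ∧ F t.1 t.2.1 t.2.2 = n}

lemma add_add_le_F {x y z : ℕ} (hxy : x ≤ y) (hyz : y ≤ z) (hxz : x < z) :
    (x + y + z : ℤ) ≤ F x y z := by
  have hsum : (2 : ℤ) ≤ ((x : ℤ) - y) ^ 2 + ((y : ℤ) - z) ^ 2 + ((z : ℤ) - x) ^ 2 := by
    rcases hxy.lt_or_eq with hlt | rfl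
    · nlinarith [sq_nonneg ((y : ℤ) - z), (by exact_mod_cast hlt : (x : ℤ) + 1 ≤ y)]
    · nlinarith [(by exact_mod_cast hxz : (x : ℤ) + 1 ≤ z)]
  have hF : 2 * F x y z =
      (x + y + z : ℤ) * (((x : ℤ) - y) ^ 2 + ((y : ℤ) - z) ^ 2 + ((z : ℤ) - x) ^ 2) := by
    unfold F; ring
  nlinarith [mul_le_mul_of_nonneg_left hsum (by positivity : (0 : ℤ) ≤ x + y + z)]

lemma finite_setOf_F_eq (n : ℕ) :
    {t : ℕ × ℕ × ℕ |
      t.1 ≤ t.2.1 ∧ t.2.1 ≤ t.2.2 ∧ t.1 + 1 ≤ t.2.2 ∧ F t.1 t.2.1 t.2.2 = n}.Finite := by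
  refine (Set.finite_Iic (n, n, n)).subset ?_
  rintro ⟨x, y, z⟩ ⟨hxy, hyz, hxz, hF⟩
  have hle : (x + y + z : ℤ) ≤ n := hF ▸ add_add_le_F hxy hyz hxz
  simp only [Set.mem_Iic, Prod.mk_le_mk]
  omega

lemma F_sub_self_add {k d : ℕ} (hdk : d ≤ k) : F (k - d) k (k + d) = 9 * d ^ 2 * k := by
  unfold F; push_cast [hdk]; ring

lemma card_le_nu_nine_mul {m : ℕ} (D : Finset ℕ) (hD : ∀ d ∈ D, 0 < d ∧ d ^ 2 ∣ m ∧ d ^ 3 ≤ m) :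
    D.card ≤ nu (9 * m) := by
  let f : ℕ → ℕ × ℕ × ℕ := fun d => (m / d ^ 2 - d, m / d ^ 2, m / d ^ 2 + d)
  have hf_injOn : Set.InjOn f D := by
    intro a _ b _ hab
    simp only [f, Prod.mk.injEq] at hab
    omega
  have hf_mapsTo : f '' D ⊆ {t : ℕ × ℕ × ℕ |
      t.1 ≤ t.2.1 ∧ t.2.1 ≤ t.2.2 ∧ t.1 + 1 ≤ t.2.2 ∧ F t.1 t.2.1 t.2.2 = (9 * m : ℕ)} := by
    rintro _ ⟨d, hd, rfl⟩
    obtain ⟨hpos, hdvd, hle⟩ := hD d hd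
    have hdk : d ≤ m / d ^ 2 := (Nat.le_div_iff_mul_le (by positivity)).2 (by rwa [← pow_succ'])
    refine ⟨Nat.sub_le _ _, Nat.le_add_right _ _,
      show m / d ^ 2 - d + 1 ≤ m / d ^ 2 + d by omega, ?_⟩
    rw [F_sub_self_add hdk, mul_assoc, ← Nat.cast_pow, ← Nat.cast_mul, Nat.mul_div_cancel' hdvd]
    push_cast; ring
  calc D.card = (f '' D).ncard := by rw [hf_injOn.ncard_image, Set.ncard_coe_finset]
    _ ≤ nu (9 * m) := Set.ncard_le_ncard hf_mapsTo (finite_setOf_F_eq _)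

theorem stmt_14 : ∀ N : ℕ, ∃ n : ℕ, 0 < n ∧ nu n ≥ N := by
  intro N
  refine ⟨9 * N.factorial ^ 3, by positivity, ?_⟩
  have hD : ∀ d ∈ Finset.Icc 1 N,
      0 < d ∧ d ^ 2 ∣ N.factorial ^ 3 ∧ d ^ 3 ≤ N.factorial ^ 3 := by
    intro d hd
    obtain ⟨hd1, hdN⟩ := Finset.mem_Icc.1 hd
    have hdvd : d ∣ N.factorial := Nat.dvd_factorial hd1 hdN
    refine ⟨hd1, (pow_dvd_pow_of_dvd hdvd 2).trans (pow_dvd_pow _ (by norm_num)), ?_⟩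
    exact Nat.pow_le_pow_left (Nat.le_of_dvd N.factorial_pos hdvd) 3
  simpa using card_le_nu_nine_mul _ hD
end

section
/- For every positive integer n there exists a positive integer k such that ν(k) = n; that is, every positive integer is attained as a value of ν. -/
/-!
Writing `y = x + a`, `z = x + a + b` gives `F = (3x + 2a + b)(a² + ab + b²)`. If this is `2 ^ m`,
then `a² + ab + b²` is a power of two, which forces `(a, b) = (2 ^ i, 0)` or `(0, 2 ^ i)`, and then
`3x = 2 ^ (m - 2i) - 2 ^ (i + 1)` resp. `2 ^ (m - 2i) - 2 ^ i`. Since `2 ^ s ≡ 2 ^ t (mod 3)` exactly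
when `s ≡ t (mod 2)`, for each `i` with `3i ≤ m` precisely one of the two cases gives a solution,
so `ν(2 ^ m) = ⌊m / 3⌋ + 1` and `ν(2 ^ (3(n - 1))) = n`.
-/

lemma F_add_add (x a b : ℕ) :
    F x (x + a) (x + a + b) = ((3 * x + 2 * a + b) * (a ^ 2 + a * b + b ^ 2) : ℕ) := by
  unfold F; push_cast; ring

lemma Nat.two_pow_mod_three (t : ℕ) : 2 ^ t % 3 = 1 + t % 2 := by
  induction t with
  | zero => rfl
  | succ t ih =>
    rw [pow_succ, Nat.mul_mod, ih]
    rcases Nat.mod_two_eq_zero_or_one t with h | h <;> simp [h, Nat.add_mod]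

lemma Nat.three_dvd_two_pow_sub_two_pow_iff {s t : ℕ} (h : s ≤ t) :
    3 ∣ 2 ^ t - 2 ^ s ↔ s % 2 = t % 2 := by
  have hs := Nat.two_pow_mod_three s
  have ht := Nat.two_pow_mod_three t
  have hle : 2 ^ s ≤ 2 ^ t := Nat.pow_le_pow_right two_pos h
  omega

lemma Nat.sq_add_mul_add_sq_mod_two {a b : ℕ} (h : ¬(2 ∣ a ∧ 2 ∣ b)) :
    (a ^ 2 + a * b + b ^ 2) % 2 = 1 := by
  simp only [Nat.dvd_iff_mod_eq_zero] at h
  rcases Nat.mod_two_eq_zero_or_one a with ha | ha <;>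
    rcases Nat.mod_two_eq_zero_or_one b with hb | hb <;>
    simp_all [Nat.add_mod, Nat.mul_mod, pow_two]

lemma Nat.sq_add_mul_add_sq_eq_two_pow {a b j : ℕ} (h : a ^ 2 + a * b + b ^ 2 = 2 ^ j) :
    ∃ i, j = 2 * i ∧ (a = 2 ^ i ∧ b = 0 ∨ a = 0 ∧ b = 2 ^ i) := by
  induction j using Nat.strong_induction_on generalizing a b with
  | _ j ih =>
    by_cases hab : 2 ∣ a ∧ 2 ∣ b
    · obtain ⟨⟨a, rfl⟩, ⟨b, rfl⟩⟩ := hab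
      have h4 : 4 * (a ^ 2 + a * b + b ^ 2) = 2 ^ j := by rw [← h]; ring
      obtain ⟨j, rfl⟩ : ∃ j', j = j' + 2 := by
        rcases j with _ | _ | j <;> [omega; omega; exact ⟨j, rfl⟩]
      obtain ⟨i, rfl, hc⟩ := ih j (by omega) (a := a) (b := b) (by rw [pow_add] at h4; omega)
      refine ⟨i + 1, by ring, ?_⟩
      rcases hc with ⟨rfl, rfl⟩ | ⟨rfl, rfl⟩
      · exact Or.inl ⟨by ring, rfl⟩
      · exact Or.inr ⟨rfl, by ring⟩
    · have hodd := Nat.sq_add_mul_add_sq_mod_two hab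
      obtain rfl : j = 0 := by
        by_contra hj
        have := Nat.two_pow_mod_two_eq_zero.2 (Nat.pos_of_ne_zero hj)
        omega
      have ha : a ≤ 1 := by nlinarith
      have hb : b ≤ 1 := by nlinarith
      refine ⟨0, rfl, ?_⟩
      interval_cases a <;> interval_cases b <;> simp_all

def IsSolution (N : ℕ) (t : ℕ × ℕ × ℕ) : Prop :=
  t.1 ≤ t.2.1 ∧ t.2.1 ≤ t.2.2 ∧ t.1 + 1 ≤ t.2.2 ∧ F t.1 t.2.1 t.2.2 = N

lemma nu_eq_ncard (N : ℕ) : nu N = {t | IsSolution N t}.ncard := rfl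

lemma isSolution_iff (N x a b : ℕ) :
    IsSolution N (x, x + a, x + a + b) ↔
      0 < a + b ∧ (3 * x + 2 * a + b) * (a ^ 2 + a * b + b ^ 2) = N := by
  simp only [IsSolution, F_add_add, Nat.cast_inj]
  omega

/-- The solution of `F = 2 ^ m` with `z - x = 2 ^ i`; the parity of `m + i` decides whether
`y = x` or `y = z`. -/
def powTriple (m i : ℕ) : ℕ × ℕ × ℕ :=
  if Even (m + i) then
    let x := (2 ^ (m - 2 * i) - 2 ^ i) / 3
    (x, x, x + 2 ^ i)
  else
    let x := (2 ^ (m - 2 * i) - 2 ^ (i + 1)) / 3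
    (x, x + 2 ^ i, x + 2 ^ i)

lemma powTriple_injective (m : ℕ) : Function.Injective (powTriple m) := by
  have hgap (i : ℕ) : (powTriple m i).2.2 - (powTriple m i).1 = 2 ^ i := by
    unfold powTriple; split <;> simp
  intro i i' h
  exact Nat.pow_right_injective le_rfl ((hgap i).symm.trans (h ▸ hgap i'))

lemma isSolution_powTriple {m i : ℕ} (hi : 3 * i ≤ m) : IsSolution (2 ^ m) (powTriple m i) := by
  have hpow : 2 ^ (m - 2 * i) * (2 ^ i) ^ 2 = 2 ^ m := by
    rw [← pow_mul, ← pow_add]; congr 1; omega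
  have hle {s : ℕ} (hs : s ≤ m - 2 * i) : 2 ^ s ≤ 2 ^ (m - 2 * i) :=
    Nat.pow_le_pow_right two_pos hs
  unfold powTriple
  split_ifs with hpar
  · have hdvd := (Nat.three_dvd_two_pow_sub_two_pow_iff (show i ≤ m - 2 * i by omega)).2
      (by rcases hpar with ⟨k, hk⟩; omega)
    set x := (2 ^ (m - 2 * i) - 2 ^ i) / 3
    have h3x : 3 * x + 2 ^ i = 2 ^ (m - 2 * i) := by
      have := hle (s := i) (by omega); omega
    simpa using (isSolution_iff _ _ 0 (2 ^ i)).2 ⟨by positivity, by rw [← hpow, ← h3x]; ring⟩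
  · -- `m = 3i` would make `m + i` even
    have hlt : 3 * i < m :=
      hi.lt_of_ne fun h ↦ hpar ⟨2 * i, by omega⟩
    have hdvd := (Nat.three_dvd_two_pow_sub_two_pow_iff (show i + 1 ≤ m - 2 * i by omega)).2
      (by rw [Nat.not_even_iff_odd] at hpar; rcases hpar with ⟨k, hk⟩; omega)
    set x := (2 ^ (m - 2 * i) - 2 ^ (i + 1)) / 3
    have h3x : 3 * x + 2 * 2 ^ i = 2 ^ (m - 2 * i) := by
      have := hle (s := i + 1) (by omega); rw [pow_succ] at *; omega
    simpa using (isSolution_iff _ _ (2 ^ i) 0).2 ⟨by positivity, by rw [← hpow, ← h3x]; ring⟩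

lemma exists_powTriple_eq_of_mul_eq_two_pow {x a b m : ℕ}
    (h : (3 * x + 2 * a + b) * (a ^ 2 + a * b + b ^ 2) = 2 ^ m) :
    ∃ i, 3 * i ≤ m ∧ powTriple m i = (x, x + a, x + a + b) := by
  obtain ⟨j, hjm, hj⟩ := (Nat.dvd_prime_pow Nat.prime_two).1 (Dvd.intro_left _ h)
  obtain ⟨i, rfl, hab⟩ := Nat.sq_add_mul_add_sq_eq_two_pow hj
  have hlin : 3 * x + 2 * a + b = 2 ^ (m - 2 * i) := by
    refine Nat.eq_of_mul_eq_mul_right (Nat.two_pow_pos (2 * i)) ?_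
    rw [← hj, h, hj, ← pow_add]; congr 1; omega
  have hle {s : ℕ} (hs : 2 ^ s ≤ 2 ^ (m - 2 * i)) : s ≤ m - 2 * i :=
    (Nat.pow_le_pow_iff_right one_lt_two).1 hs
  refine ⟨i, ?_⟩
  rcases hab with ⟨rfl, rfl⟩ | ⟨rfl, rfl⟩
  · have hs := hle (s := i + 1) (by rw [pow_succ]; omega)
    have hpar := (Nat.three_dvd_two_pow_sub_two_pow_iff hs).1 (by rw [pow_succ]; omega)
    have hodd : ¬Even (m + i) := by rw [Nat.even_iff]; omega
    refine ⟨by omega, ?_⟩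
    simp only [powTriple, if_neg hodd, add_zero, Prod.mk.injEq]
    rw [pow_succ]; omega
  · have hs := hle (s := i) (by omega)
    have hpar := (Nat.three_dvd_two_pow_sub_two_pow_iff hs).1 (by omega)
    have heven : Even (m + i) := by rw [Nat.even_iff]; omega
    refine ⟨by omega, ?_⟩
    simp only [powTriple, if_pos heven, add_zero, Prod.mk.injEq]
    omega

lemma isSolution_two_pow_iff (m : ℕ) (t : ℕ × ℕ × ℕ) :
    IsSolution (2 ^ m) t ↔ ∃ i, 3 * i ≤ m ∧ powTriple m i = t := by
  refine ⟨fun ht ↦ ?_, fun ⟨i, hi, hit⟩ ↦ hit ▸ isSolution_powTriple hi⟩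
  obtain ⟨x, y, z⟩ := t
  obtain ⟨a, rfl⟩ := Nat.exists_eq_add_of_le (show x ≤ y from ht.1)
  obtain ⟨b, rfl⟩ := Nat.exists_eq_add_of_le (show x + a ≤ z from ht.2.1)
  exact exists_powTriple_eq_of_mul_eq_two_pow ((isSolution_iff _ x a b).1 ht).2

theorem nu_two_pow (m : ℕ) : nu (2 ^ m) = m / 3 + 1 := by
  have hset : {t | IsSolution (2 ^ m) t} = (Finset.range (m / 3 + 1)).image (powTriple m) := by
    ext t
    simp [isSolution_two_pow_iff, Nat.le_div_iff_mul_le, mul_comm]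
  rw [nu_eq_ncard, hset, Set.ncard_coe_finset,
    Finset.card_image_of_injective _ (powTriple_injective m), Finset.card_range]

theorem stmt_17 (n : ℕ) (hn : 0 < n) : ∃ k : ℕ, 0 < k ∧ nu k = n :=
  ⟨2 ^ (3 * (n - 1)), Nat.two_pow_pos _, by rw [nu_two_pow]; omega⟩
end
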